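/- Let Q ⊆ ℝⁿ be closed convex, J(p) = ½‖Bᵀp + c‖² + (α/2)‖p‖² with Hessian coercivity pᵀ(B Bᵀ + α I)p ≥ κ‖p‖², κ > 0. If p⋆ is the minimizer of J on Q and p₀ ∈ Q with ‖p₀‖ = min{‖q‖ : q ∈ Q}, then ‖p⋆‖ ≤ max{1, κ⁻¹(‖p₀‖·‖B Bᵀ + α I‖ + (1 + ‖p₀‖)·‖Bc‖)}, where ‖B Bᵀ + α I‖ is the spectral norm. -/
import Mathlib

open Matrix

theorem stmt4 (n m : ℕ) (B : Matrix (Fin n) (Fin m) ℝ) (c : EuclideanSpace ℝ (Fin m))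
    (α : ℝ) (hα : 0 ≤ α) (κ : ℝ) (hκ : 0 < κ)
    (Q : Set (EuclideanSpace ℝ (Fin n))) (hQc : IsClosed Q) (hQconv : Convex ℝ Q)
    (hcoer : ∀ p : EuclideanSpace ℝ (Fin n),
      κ * ‖p‖ ^ 2 ≤ p ⬝ᵥ (B * Bᵀ + α • (1 : Matrix (Fin n) (Fin n) ℝ)).mulVec p)
    (J' : EuclideanSpace ℝ (Fin n) → EuclideanSpace ℝ (Fin n) → ℝ)
    (hJ' : ∀ p q, J' p q
        = q ⬝ᵥ (B * Bᵀ + α • (1 : Matrix (Fin n) (Fin n) ℝ)).mulVec p + q ⬝ᵥ B.mulVec c)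
    (pstar : EuclideanSpace ℝ (Fin n)) (hpstarQ : pstar ∈ Q)
    (hfoc : ∀ p ∈ Q, 0 ≤ J' pstar (p - pstar))
    (p0 : EuclideanSpace ℝ (Fin n)) (hp0Q : p0 ∈ Q) (hp0min : ∀ q ∈ Q, ‖p0‖ ≤ ‖q‖) :
    ‖pstar‖ ≤ max 1 (κ⁻¹ * (‖p0‖ *
        ‖Matrix.toEuclideanCLM (𝕜 := ℝ) (B * Bᵀ + α • (1 : Matrix (Fin n) (Fin n) ℝ))‖
      + (1 + ‖p0‖) * ‖(WithLp.equiv 2 (Fin n → ℝ)).symm (B.mulVec c)‖)) := by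
  set A := B * Bᵀ + α • (1 : Matrix (Fin n) (Fin n) ℝ) with hA
  set T := Matrix.toEuclideanCLM (𝕜 := ℝ) A with hT
  set b := (WithLp.equiv 2 (Fin n → ℝ)).symm (B.mulVec c) with hb
  have hdot : ∀ (q : EuclideanSpace ℝ (Fin n)) (v : Fin n → ℝ),
      q ⬝ᵥ v = @inner ℝ _ _ q ((WithLp.equiv 2 (Fin n → ℝ)).symm v) := by
    intro q v
    simp [PiLp.inner_apply, dotProduct, RCLike.inner_apply, mul_comm]
  have hTv : ∀ p : EuclideanSpace ℝ (Fin n),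
      (WithLp.equiv 2 (Fin n → ℝ)).symm (A.mulVec p) = T p := by
    intro p; rfl
  have hfoc0 := hfoc p0 hp0Q
  rw [hJ' pstar (p0 - pstar)] at hfoc0
  rw [hdot, hdot, hTv] at hfoc0
  rw [inner_sub_left, inner_sub_left] at hfoc0
  have hcoer' : κ * ‖pstar‖ ^ 2 ≤ @inner ℝ _ _ pstar (T pstar) := by
    rw [← hTv, ← hdot]; exact hcoer pstar
  have h1 : @inner ℝ _ _ p0 (T pstar) ≤ ‖p0‖ * (‖T‖ * ‖pstar‖) := by
    calc @inner ℝ _ _ p0 (T pstar) ≤ ‖p0‖ * ‖T pstar‖ := real_inner_le_norm _ _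
    _ ≤ ‖p0‖ * (‖T‖ * ‖pstar‖) :=
        mul_le_mul_of_nonneg_left (T.le_opNorm pstar) (norm_nonneg _)
  have h2 : @inner ℝ _ _ p0 b ≤ ‖p0‖ * ‖b‖ := real_inner_le_norm _ _
  have h3 : -(@inner ℝ _ _ pstar b) ≤ ‖pstar‖ * ‖b‖ := by
    rw [← inner_neg_right]
    calc @inner ℝ _ _ pstar (-b) ≤ ‖pstar‖ * ‖-b‖ := real_inner_le_norm _ _
    _ = ‖pstar‖ * ‖b‖ := by rw [norm_neg]
  rcases le_or_gt ‖pstar‖ 1 with h | h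
  · exact le_max_of_le_left h
  · refine le_max_of_le_right ?_
    rw [← hb] at hfoc0
    have hs : (0:ℝ) < ‖pstar‖ := lt_trans one_pos h
    have hp0 : (0:ℝ) ≤ ‖p0‖ := norm_nonneg _
    have hbn : (0:ℝ) ≤ ‖b‖ := norm_nonneg _
    have hTn : (0:ℝ) ≤ ‖T‖ := norm_nonneg _
    rw [le_inv_mul_iff₀ hκ]
    have key : κ * ‖pstar‖ ^ 2 ≤ ‖p0‖ * ‖T‖ * ‖pstar‖ + ‖p0‖ * ‖b‖ + ‖pstar‖ * ‖b‖ := by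
      nlinarith
    nlinarith [mul_nonneg (mul_nonneg hp0 hbn) (sub_nonneg.mpr h.le), key, hs]
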